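/- Let X be an a-normal space with denominator function ζ and let x ≠ y be points of X. Then there exists a continuous function f : X → [0,1] with den(f(z)) dividing ζ(z) for all z ∈ X, such that f(x) = 0 and f(y) = 1. -/
import Mathlib


open Classical in
/-- The denominator of a real number: the reduced denominator if rational, `0` if irrational. -/
noncomputable def den (r : ℝ) : ℕ :=
  if h : ∃ q : ℚ, (q : ℝ) = r then h.choose.den else 0

/-- An a-normal space structure on a topological space `X` with denominator function `ζ`. -/
def ANormal {X : Type*} [TopologicalSpace X] (ζ : X → ℕ) : Prop :=
  CompactSpace X ∧ T2Space X ∧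
  (∀ n : ℕ, IsClosed {x : X | ζ x ∣ n}) ∧
  ∀ x y : X, x ≠ y → ∃ U V : Set X, IsOpen U ∧ IsOpen V ∧ x ∈ U ∧ y ∈ V ∧
    Disjoint U V ∧ ∀ z ∈ (U ∪ V)ᶜ, ζ z = 0

/-! ### Auxiliary lemmas on `den` -/

lemma den_ratCast (q : ℚ) : den ((q : ℝ)) = q.den := by
  rw [den, dif_pos ⟨q, rfl⟩]
  congr 1
  exact Rat.cast_injective (Exists.choose_spec (⟨q, rfl⟩ : ∃ p : ℚ, (p : ℝ) = (q : ℝ)))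

lemma den_div_nat (k q : ℕ) : den (((k : ℚ) / (q : ℚ) : ℚ) : ℝ) ∣ q := by
  rw [den_ratCast]
  have h : ((k : ℚ) / (q : ℚ)) = Rat.divInt (k : ℤ) (q : ℤ) := by
    rw [Rat.divInt_eq_div]; push_cast; ring
  rw [h]
  exact_mod_cast Rat.den_dvd (k : ℤ) (q : ℤ)

/-! ### The grid-free predicate -/

/-- No point of the grid `{k/q : k ∈ ℕ}` lies in `[a, b]`. -/
def Gfree (q : ℕ) (a b : ℚ) : Prop :=
  ∀ k : ℕ, ¬ (a ≤ (k : ℚ) / (q : ℚ) ∧ (k : ℚ) / (q : ℚ) ≤ b)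

lemma Gfree.mono {q : ℕ} {a b a' b' : ℚ} (h : Gfree q a b) (ha : a ≤ a') (hb : b' ≤ b) :
    Gfree q a' b' := fun k hk => h k ⟨ha.trans hk.1, hk.2.trans hb⟩

lemma Gfree.union {q : ℕ} {a t b : ℚ} (h1 : Gfree q a t) (h2 : Gfree q t b) :
    Gfree q a b := by
  intro k hk
  rcases le_total ((k : ℚ) / (q : ℚ)) t with h | h
  · exact h1 k ⟨hk.1, h⟩
  · exact h2 k ⟨h, hk.2⟩

lemma Gfree.of_dvd {d q : ℕ} (hd : d ∣ q) (hq : 1 ≤ q) {a b : ℚ} (h : Gfree q a b) :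
    Gfree d a b := by
  intro k hk
  obtain ⟨c, rfl⟩ := hd
  have hc : c ≠ 0 := by rintro rfl; simp at hq
  have key : ((k * c : ℕ) : ℚ) / ((d * c : ℕ) : ℚ) = (k : ℚ) / (d : ℚ) := by
    push_cast
    rw [mul_div_mul_right _ _ (by exact_mod_cast hc)]
  exact h (k * c) (by rw [key]; exact hk)

lemma Gfree.bound {q : ℕ} (hq : 1 ≤ q) {a b : ℚ} (ha : 0 ≤ a) (hab : a < b)
    (h : Gfree q a b) : (q : ℚ) < (b - a)⁻¹ := by
  by_contra hc
  push_neg at hc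
  have hq0 : (0 : ℚ) < q := by exact_mod_cast hq
  set K : ℤ := ⌈a * q⌉ with hK
  have hK0 : 0 ≤ K := Int.ceil_nonneg (by positivity)
  have h1 : a * q ≤ (K : ℚ) := Int.le_ceil _
  have h2 : (K : ℚ) < a * q + 1 := Int.ceil_lt_add_one _
  have hba : (0 : ℚ) < b - a := by linarith
  have h3 : (1 : ℚ) ≤ (b - a) * q := by
    have h5 := mul_le_mul_of_nonneg_left hc (le_of_lt hba)
    rwa [mul_inv_cancel₀ (ne_of_gt hba)] at h5
  have hcast : ((K.toNat : ℕ) : ℚ) = (K : ℚ) := by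
    exact_mod_cast congrArg (fun z : ℤ => (z : ℚ)) (Int.toNat_of_nonneg hK0)
  refine h K.toNat ⟨?_, ?_⟩
  · rw [le_div_iff₀ hq0, hcast]; linarith
  · rw [div_le_iff₀ hq0, hcast]; nlinarith

section ASpace
variable {X : Type*} [TopologicalSpace X]

/-! ### The closed sets `Dset` -/

/-- Points `z` with `ζ z ≥ 1` such that the grid with denominator `ζ z` misses `[a,b]`. -/
def Dset (ζ : X → ℕ) (a b : ℚ) : Set X :=
  ⋃ q ∈ Finset.Icc 1 ⌈(b - a)⁻¹⌉₊, {z | ζ z ∣ q ∧ Gfree q a b}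

lemma isClosed_Dset {ζ : X → ℕ} (hN2 : ∀ n, IsClosed {x : X | ζ x ∣ n}) (a b : ℚ) :
    IsClosed (Dset ζ a b) := by
  apply Set.Finite.isClosed_biUnion (Finset.finite_toSet _)
  intro q _
  by_cases h : Gfree q a b
  · convert hN2 q using 1; ext z; simp [h]
  · convert isClosed_empty using 1; ext z; simp [h]

lemma mem_Dset {ζ : X → ℕ} {a b : ℚ} (ha : 0 ≤ a) (hab : a < b) {z : X} :
    z ∈ Dset ζ a b ↔ 1 ≤ ζ z ∧ Gfree (ζ z) a b := by
  constructor
  · rintro hz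
    simp only [Dset, Set.mem_iUnion, Finset.mem_Icc] at hz
    obtain ⟨q, ⟨hq1, -⟩, hdvd, hfree⟩ := hz
    have hz1 : ζ z ≠ 0 := by
      rintro h0; rw [h0] at hdvd; exact absurd (zero_dvd_iff.mp hdvd) (by omega)
    exact ⟨by omega, hfree.of_dvd hdvd hq1⟩
  · rintro ⟨h1, hfree⟩
    simp only [Dset, Set.mem_iUnion, Finset.mem_Icc]
    refine ⟨ζ z, ⟨h1, ?_⟩, dvd_refl _, hfree⟩
    have hb := hfree.bound h1 ha hab
    have hcc : (ζ z : ℚ) < (⌈(b - a)⁻¹⌉₊ : ℚ) := lt_of_lt_of_le hb (Nat.le_ceil _)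
    exact_mod_cast hcc.le

lemma isClosed_bounded_union {S : ℕ → Set X} {P : ℕ → Prop} {n : ℕ}
    (hS : ∀ m, m < n → P m → IsClosed (S m)) :
    IsClosed {z | ∃ m, m < n ∧ P m ∧ z ∈ S m} := by
  classical
  have he : {z | ∃ m, m < n ∧ P m ∧ z ∈ S m} = ⋃ m ∈ Finset.range n, ⋃ (_ : P m), S m := by
    ext z; simp [Finset.mem_range]
    tauto
  rw [he]
  apply Set.Finite.isClosed_biUnion (Finset.finite_toSet _)
  intro m hm
  rw [Finset.mem_coe, Finset.mem_range] at hm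
  by_cases h : P m
  · simp [Set.iUnion_eq_if, h, hS m hm h]
  · simp [Set.iUnion_eq_if, h]

/-! ### Separation lemmas in a-normal spaces -/

variable {ζ : X → ℕ}

lemma ANormal.sep_pt (hX : ANormal ζ) (a : X) {B : Set X} (hB : IsClosed B) (ha : a ∉ B) :
    ∃ U V : Set X, IsOpen U ∧ IsOpen V ∧ a ∈ U ∧ B ⊆ V ∧ Disjoint U V ∧
      ∀ z, z ∉ U → z ∉ V → ζ z = 0 := by
  obtain ⟨hcomp, ht2, hN2, hN3⟩ := hX
  have hpt : ∀ b : X, b ∈ B → ∃ U V : Set X, IsOpen U ∧ IsOpen V ∧ a ∈ U ∧ b ∈ V ∧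
      Disjoint U V ∧ ∀ z, z ∉ U → z ∉ V → ζ z = 0 := by
    intro b hb
    obtain ⟨U, V, hUo, hVo, haU, hbV, hd, hz⟩ := hN3 a b (fun h => ha (h ▸ hb))
    exact ⟨U, V, hUo, hVo, haU, hbV, hd, fun z h1 h2 => hz z (by simp [h1, h2])⟩
  choose! U V hUo hVo haU hbV hd hz using hpt
  have hcov : B ⊆ ⋃ b : B, V b := fun b hb => Set.mem_iUnion.2 ⟨⟨b, hb⟩, hbV b hb⟩
  obtain ⟨t, ht⟩ := hB.isCompact.elim_finite_subcover (fun b : B => V b)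
    (fun b => hVo b b.2) hcov
  refine ⟨⋂ b ∈ t, U b, ⋃ b ∈ t, V b, isOpen_biInter_finset (fun b _ => hUo b b.2),
    isOpen_biUnion (fun b _ => hVo b b.2), Set.mem_iInter₂.2 (fun b _ => haU b b.2),
    ht, ?_, ?_⟩
  · rw [Set.disjoint_left]
    intro z hzU hzV
    obtain ⟨b, hb, hzb⟩ := Set.mem_iUnion₂.1 hzV
    exact Set.disjoint_left.1 (hd b b.2) (Set.mem_iInter₂.1 hzU b hb) hzb
  · intro z h1 h2
    obtain ⟨b, hb, hzb⟩ : ∃ b ∈ t, z ∉ U b := by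
      by_contra hcon; push_neg at hcon
      exact h1 (Set.mem_iInter₂.2 hcon)
    exact hz b b.2 z hzb (fun hzV => h2 (Set.mem_iUnion₂.2 ⟨b, hb, hzV⟩))

lemma ANormal.sep (hX : ANormal ζ) {A B : Set X} (hA : IsClosed A) (hB : IsClosed B)
    (hAB : Disjoint A B) :
    ∃ U V : Set X, IsOpen U ∧ IsOpen V ∧ A ⊆ U ∧ B ⊆ V ∧ Disjoint U V ∧
      ∀ z, z ∉ U → z ∉ V → ζ z = 0 := by
  haveI : CompactSpace X := hX.1
  have hpt : ∀ a : X, a ∈ A → ∃ U V : Set X, IsOpen U ∧ IsOpen V ∧ a ∈ U ∧ B ⊆ V ∧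
      Disjoint U V ∧ ∀ z, z ∉ U → z ∉ V → ζ z = 0 :=
    fun a ha => hX.sep_pt a hB (Set.disjoint_left.1 hAB ha)
  choose! U V hUo hVo haU hBV hd hz using hpt
  have hcov : A ⊆ ⋃ a : A, U a := fun a ha => Set.mem_iUnion.2 ⟨⟨a, ha⟩, haU a ha⟩
  obtain ⟨t, ht⟩ := hA.isCompact.elim_finite_subcover (fun a : A => U a)
    (fun a => hUo a a.2) hcov
  refine ⟨⋃ a ∈ t, U a, ⋂ a ∈ t, V a, isOpen_biUnion (fun a _ => hUo a a.2),
    isOpen_biInter_finset (fun a _ => hVo a a.2), ht,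
    Set.subset_iInter₂ (fun a _ => hBV a a.2), ?_, ?_⟩
  · rw [Set.disjoint_left]
    intro z hzU hzV
    obtain ⟨a, ha, hza⟩ := Set.mem_iUnion₂.1 hzU
    exact Set.disjoint_left.1 (hd a a.2) hza (Set.mem_iInter₂.1 hzV a ha)
  · intro z h1 h2
    obtain ⟨a, ha, hza⟩ : ∃ a ∈ t, z ∉ V a := by
      by_contra hcon; push_neg at hcon
      exact h2 (Set.mem_iInter₂.2 hcon)
    exact hz a a.2 z (fun hzU => h1 (Set.mem_iUnion₂.2 ⟨a, ha, hzU⟩)) hza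

lemma ANormal.thicken (hX : ANormal ζ) {A B : Set X} (hA : IsClosed A) (hB : IsClosed B)
    (hAB : Disjoint A B) :
    ∃ W : Set X, IsOpen W ∧ A ⊆ W ∧ Disjoint (closure W) B ∧
      ∀ z ∈ closure W \ W, ζ z = 0 := by
  obtain ⟨U, V, hUo, hVo, hAU, hBV, hd, hz⟩ := hX.sep hA hB hAB
  have hclV : Disjoint (closure U) V := hd.closure_left hVo
  refine ⟨U, hUo, hAU, hclV.mono_right hBV, fun z hzd => ?_⟩
  exact hz z hzd.2 (Set.disjoint_left.1 hclV hzd.1)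

/-! ### The Urysohn-type family -/

/-- The invariant satisfied by the next open set `W` (for the rational `rq n`), relative to
the previously constructed open sets `F m`, `m < n` (for the rationals `rq m`). -/
def GoodFam (ζ : X → ℕ) (x y : X) (rq : ℕ → ℚ) (n : ℕ) (F : ℕ → Set X) (W : Set X) : Prop :=
  IsOpen W ∧ x ∈ W ∧ y ∉ closure W ∧
  (∀ m, m < n → rq m < rq n → closure (F m) ⊆ W) ∧
  (∀ m, m < n → rq n < rq m → closure W ⊆ F m) ∧
  (∀ m, m < n → ∀ q : ℕ, 1 ≤ q → rq m < rq n → Gfree q (rq m) (rq n) →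
      {z | ζ z ∣ q} ∩ closure W ⊆ F m) ∧
  (∀ m, m < n → ∀ q : ℕ, 1 ≤ q → rq n < rq m → Gfree q (rq n) (rq m) →
      {z | ζ z ∣ q} ∩ closure (F m) ⊆ W) ∧
  (∀ z ∈ closure W \ W, ζ z = 0)

lemma GoodFam.congr {ζ : X → ℕ} {x y : X} {rq : ℕ → ℚ} {n : ℕ} {F F' : ℕ → Set X} {W : Set X}
    (h : GoodFam ζ x y rq n F W) (hFF : ∀ m, m < n → F m = F' m) :
    GoodFam ζ x y rq n F' W := by
  obtain ⟨h1, h2, h3, h4, h5, h6, h7, h8⟩ := h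
  refine ⟨h1, h2, h3, ?_, ?_, ?_, ?_, h8⟩
  · intro m hm; rw [← hFF m hm]; exact h4 m hm
  · intro m hm; rw [← hFF m hm]; exact h5 m hm
  · intro m hm; rw [← hFF m hm]; exact h6 m hm
  · intro m hm; rw [← hFF m hm]; exact h7 m hm

lemma key_lemma {ζ : X → ℕ} (hX : ANormal ζ) {x y : X} (hxy : x ≠ y) {rq : ℕ → ℚ}
    (hinj : Function.Injective rq) (hr0 : ∀ n, 0 ≤ rq n)
    (n : ℕ) (F : ℕ → Set X) (hF : ∀ m, m < n → GoodFam ζ x y rq m F (F m)) :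
    ∃ W, GoodFam ζ x y rq n F W := by
  haveI : T2Space X := hX.2.1
  have hN2 := hX.2.2.1
  have openF : ∀ m, m < n → IsOpen (F m) := fun m hm => (hF m hm).1
  have xF : ∀ m, m < n → x ∈ F m := fun m hm => (hF m hm).2.1
  have yF : ∀ m, m < n → y ∉ closure (F m) := fun m hm => (hF m hm).2.2.1
  have mono : ∀ m k, m < n → k < n → rq m < rq k → closure (F m) ⊆ F k := by
    intro m k hm hk h
    rcases lt_trichotomy m k with hmk | rfl | hmk
    · exact (hF k hk).2.2.2.1 m hmk h
    · exact absurd h (lt_irrefl _)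
    · exact (hF m hm).2.2.2.2.1 k hmk h
  have inv : ∀ m k, m < n → k < n → ∀ q : ℕ, 1 ≤ q → rq m ≤ rq k → Gfree q (rq m) (rq k) →
      {z | ζ z ∣ q} ∩ closure (F k) ⊆ F m := by
    intro m k hm hk q hq hle hfree
    rcases eq_or_lt_of_le hle with heq | hlt
    · obtain rfl : m = k := hinj heq
      intro z hz
      by_contra hzF
      have h0 := (hF m hm).2.2.2.2.2.2.2 z ⟨hz.2, hzF⟩
      have hdvd : ζ z ∣ q := hz.1
      rw [h0] at hdvd
      exact absurd (zero_dvd_iff.mp hdvd) (by omega)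
    · rcases lt_trichotomy m k with hmk | rfl | hmk
      · exact (hF k hk).2.2.2.2.2.1 m hmk q hq hlt hfree
      · exact absurd hlt (lt_irrefl _)
      · exact (hF m hm).2.2.2.2.2.2.1 k hmk q hq hlt hfree
  have inv1 : ∀ m, m < n → ∀ z, 1 ≤ ζ z → z ∈ closure (F m) → Gfree (ζ z) (rq m) (rq m) →
      z ∈ F m := by
    intro m hm z h1 hz hfree
    exact inv m m hm hm (ζ z) h1 le_rfl hfree ⟨dvd_refl _, hz⟩
  set t := rq n with ht
  set M : Set X :=
    ({x} ∪ {z | ∃ m, m < n ∧ rq m < t ∧ z ∈ closure (F m)})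
        ∪ {z | ∃ m, m < n ∧ t < rq m ∧ z ∈ Dset ζ t (rq m) ∩ closure (F m)} with hM
  set K : Set X :=
    ({y} ∪ {z | ∃ m, m < n ∧ rq m < t ∧ z ∈ Dset ζ (rq m) t \ F m})
        ∪ {z | ∃ m, m < n ∧ t < rq m ∧ z ∈ (F m)ᶜ} with hK
  have hMc : IsClosed M := by
    refine IsClosed.union (IsClosed.union isClosed_singleton ?_) ?_
    · exact isClosed_bounded_union (fun m _ _ => isClosed_closure)
    · exact isClosed_bounded_union
        (fun m _ _ => ((isClosed_Dset hN2 t (rq m)).inter isClosed_closure))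
  have hKc : IsClosed K := by
    refine IsClosed.union (IsClosed.union isClosed_singleton ?_) ?_
    · exact isClosed_bounded_union
        (fun m hm _ => ((isClosed_Dset hN2 (rq m) t).sdiff (openF m hm)))
    · exact isClosed_bounded_union (fun m hm _ => (openF m hm).isClosed_compl)
  have elimM : ∀ z, z ∈ M → z = x ∨ (∃ m, m < n ∧ rq m < t ∧ z ∈ closure (F m)) ∨
      (∃ m, m < n ∧ t < rq m ∧ z ∈ Dset ζ t (rq m) ∩ closure (F m)) := by
    intro z hz
    rcases hz with (h | h) | h
    exacts [Or.inl h, Or.inr (Or.inl h), Or.inr (Or.inr h)]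
  have elimK : ∀ z, z ∈ K → z = y ∨ (∃ m, m < n ∧ rq m < t ∧ z ∈ Dset ζ (rq m) t \ F m) ∨
      (∃ m, m < n ∧ t < rq m ∧ z ∈ (F m)ᶜ) := by
    intro z hz
    rcases hz with (h | h) | h
    exacts [Or.inl h, Or.inr (Or.inl h), Or.inr (Or.inr h)]
  have hMK : Disjoint M K := by
    rw [Set.disjoint_left]
    rintro z hzM hzK
    rcases elimM z hzM with rfl | ⟨m, hm, hmt, hcl⟩ | ⟨m2, hm2, htm2, hzD⟩
    · rcases elimK _ hzK with heq | ⟨m1, hm1, h1t, hD⟩ | ⟨m3, hm3, htm3, hnF⟩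
      · exact hxy heq
      · exact hD.2 (xF m1 hm1)
      · exact hnF (xF m3 hm3)
    · rcases elimK _ hzK with rfl | ⟨m1, hm1, h1t, hD⟩ | ⟨m3, hm3, htm3, hnF⟩
      · exact yF m hm hcl
      · obtain ⟨h1, hfree⟩ := (mem_Dset (hr0 m1) h1t).1 hD.1
        rcases le_or_gt (rq m1) (rq m) with hle | hlt
        · exact hD.2 (inv m1 m hm1 hm (ζ z) h1 hle (hfree.mono le_rfl hmt.le)
            ⟨dvd_refl _, hcl⟩)
        · exact hD.2 (mono m m1 hm hm1 hlt hcl)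
      · exact hnF (mono m m3 hm hm3 (hmt.trans htm3) hcl)
    · obtain ⟨h1, hfree2⟩ := (mem_Dset (hr0 n) htm2).1 hzD.1
      rcases elimK _ hzK with rfl | ⟨m1, hm1, h1t, hD⟩ | ⟨m3, hm3, htm3, hnF⟩
      · exact yF m2 hm2 hzD.2
      · obtain ⟨-, hfree1⟩ := (mem_Dset (hr0 m1) h1t).1 hD.1
        exact hD.2 (inv m1 m2 hm1 hm2 (ζ z) h1 (by linarith) (hfree1.union hfree2)
          ⟨dvd_refl _, hzD.2⟩)
      · rcases lt_trichotomy (rq m3) (rq m2) with hlt | heq | hlt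
        · exact hnF (inv m3 m2 hm3 hm2 (ζ z) h1 hlt.le (hfree2.mono htm3.le le_rfl)
            ⟨dvd_refl _, hzD.2⟩)
        · obtain rfl : m3 = m2 := hinj heq
          exact hnF (inv1 m3 hm3 z h1 hzD.2 (hfree2.mono htm2.le le_rfl))
        · exact hnF (mono m2 m3 hm2 hm3 hlt hzD.2)
  obtain ⟨W, hWo, hMW, hWK, hbd⟩ := hX.thicken hMc hKc hMK
  have memM1 : x ∈ M := Set.mem_union_left _ (Set.mem_union_left _ rfl)
  have memK1 : y ∈ K := Set.mem_union_left _ (Set.mem_union_left _ rfl)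
  refine ⟨W, hWo, hMW memM1, ?_, ?_, ?_, ?_, ?_, hbd⟩
  · intro hy
    exact Set.disjoint_left.1 hWK hy memK1
  · intro m hm hmt z hz
    exact hMW (Set.mem_union_left _ (Set.mem_union_right _ ⟨m, hm, hmt, hz⟩))
  · intro m hm htm z hz
    by_contra hzF
    exact Set.disjoint_left.1 hWK hz (Set.mem_union_right _ ⟨m, hm, htm, hzF⟩)
  · intro m hm q hq hmt hfree z hz
    have hdvd : ζ z ∣ q := hz.1
    have h1 : 1 ≤ ζ z := by
      rcases Nat.eq_zero_or_pos (ζ z) with h0 | h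
      · rw [h0] at hdvd; exact absurd (zero_dvd_iff.mp hdvd) (by omega)
      · exact h
    have hfz : Gfree (ζ z) (rq m) t := hfree.of_dvd hdvd hq
    by_contra hzF
    exact Set.disjoint_left.1 hWK hz.2 (Set.mem_union_left _ (Set.mem_union_right _
      ⟨m, hm, hmt, (mem_Dset (hr0 m) hmt).2 ⟨h1, hfz⟩, hzF⟩))
  · intro m hm q hq htm hfree z hz
    have hdvd : ζ z ∣ q := hz.1
    have h1 : 1 ≤ ζ z := by
      rcases Nat.eq_zero_or_pos (ζ z) with h0 | h
      · rw [h0] at hdvd; exact absurd (zero_dvd_iff.mp hdvd) (by omega)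
      · exact h
    have hfz : Gfree (ζ z) t (rq m) := hfree.of_dvd hdvd hq
    exact hMW (Set.mem_union_right _
      ⟨m, hm, htm, (mem_Dset (hr0 n) htm).2 ⟨h1, hfz⟩, hz.2⟩)

/-! ### The recursive construction -/

/-- Recursively builds the family of open sets; `Gaux next n` is the state after `n` steps. -/
noncomputable def Gaux (next : ℕ → (ℕ → Set X) → Set X) : ℕ → ℕ → Set X
  | 0 => fun _ => ∅
  | (k + 1) => fun m => if m = k then next k (Gaux next k) else Gaux next k m

/-- The `n`-th open set of the family. -/
noncomputable def Uaux (next : ℕ → (ℕ → Set X) → Set X) (n : ℕ) : Set X :=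
  Gaux next (n + 1) n

lemma Gaux_eq_Uaux (next : ℕ → (ℕ → Set X) → Set X) :
    ∀ n m, m < n → Gaux next n m = Uaux next m := by
  intro n
  induction n with
  | zero => intro m hm; exact absurd hm (Nat.not_lt_zero m)
  | succ k ih =>
    intro m hm
    rcases Nat.lt_succ_iff_lt_or_eq.1 hm with h | rfl
    · show (if m = k then next k (Gaux next k) else Gaux next k m) = _
      rw [if_neg (Nat.ne_of_lt h)]
      exact ih m h
    · rfl

end ASpace

/-- In an a-normal space, distinct points are separated by an a-map
into `[0,1]`. -/
theorem aspace_points_separated_by_amap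
    {X : Type*} [TopologicalSpace X] (ζ : X → ℕ) (hX : ANormal ζ)
    (x y : X) (hxy : x ≠ y) :
    ∃ f : X → ℝ, Continuous f ∧ (∀ z, f z ∈ Set.Icc (0 : ℝ) 1) ∧
      (∀ z, den (f z) ∣ ζ z) ∧ f x = 0 ∧ f y = 1 := by
  classical
  -- an injective enumeration of the rationals in `[0, 1)`
  haveI hInf : Infinite {q : ℚ // 0 ≤ q ∧ q < 1} := by
    apply Infinite.of_injective (fun n : ℕ => (⟨1 / ((n : ℚ) + 2), by positivity, by
      rw [div_lt_one (by positivity)]; linarith [Nat.cast_nonneg (α := ℚ) n]⟩ :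
        {q : ℚ // 0 ≤ q ∧ q < 1}))
    intro a b hab
    simp only [Subtype.mk.injEq, one_div] at hab
    have h2 : ((a : ℚ) + 2) = (b : ℚ) + 2 := by
      have := congrArg (fun x : ℚ => x⁻¹) hab
      simpa using this
    have h3 : (a : ℚ) = b := by linarith
    exact_mod_cast h3
  haveI : Denumerable {q : ℚ // 0 ≤ q ∧ q < 1} := Denumerable.ofEncodableOfInfinite _
  let e := Denumerable.eqv {q : ℚ // 0 ≤ q ∧ q < 1}
  let rq : ℕ → ℚ := fun n => (e.symm n).1
  have hinj : Function.Injective rq := fun a b h => e.symm.injective (Subtype.ext h)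
  have hr0 : ∀ n, 0 ≤ rq n := fun n => (e.symm n).2.1
  have hr1 : ∀ n, rq n < 1 := fun n => (e.symm n).2.2
  have hsurj : ∀ s : ℚ, 0 ≤ s → s < 1 → ∃ n, rq n = s := fun s h1 h2 =>
    ⟨e ⟨s, h1, h2⟩, by simp [rq]⟩
  -- the recursive construction of the family of open sets
  have keyAll : ∀ (n : ℕ) (F : ℕ → Set X), (∀ m, m < n → GoodFam ζ x y rq m F (F m)) →
      ∃ W, GoodFam ζ x y rq n F W := fun n F hF => key_lemma hX hxy hinj hr0 n F hF
  choose! nextW hnext using keyAll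
  let U : ℕ → Set X := Uaux nextW
  have hGU : ∀ n m, m < n → Gaux nextW n m = U m := Gaux_eq_Uaux nextW
  have hU : ∀ n, GoodFam ζ x y rq n U (U n) := by
    intro n
    induction n using Nat.strong_induction_on with
    | _ n ih =>
      have hprev : ∀ m, m < n → GoodFam ζ x y rq m (Gaux nextW n) (Gaux nextW n m) := by
        intro m hm
        rw [hGU n m hm]
        exact (ih m hm).congr (fun k hk => (hGU n k (lt_trans hk hm)).symm)
      have h3 := hnext n (Gaux nextW n) hprev
      have h4 : U n = nextW n (Gaux nextW n) := by
        show (if n = n then _ else _) = _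
        rw [if_pos rfl]
      rw [h4]
      exact h3.congr (fun m hm => hGU n m hm)
  -- global facts
  have Uopen : ∀ n, IsOpen (U n) := fun n => (hU n).1
  have xU : ∀ n, x ∈ U n := fun n => (hU n).2.1
  have yU : ∀ n, y ∉ closure (U n) := fun n => (hU n).2.2.1
  have Umono : ∀ m k, rq m < rq k → closure (U m) ⊆ U k := by
    intro m k h
    rcases lt_trichotomy m k with hmk | rfl | hmk
    · exact (hU k).2.2.2.1 m hmk h
    · exact absurd h (lt_irrefl _)
    · exact (hU m).2.2.2.2.1 k hmk h
  have Uinv : ∀ m k (q : ℕ), 1 ≤ q → rq m ≤ rq k → Gfree q (rq m) (rq k) →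
      {z | ζ z ∣ q} ∩ closure (U k) ⊆ U m := by
    intro m k q hq hle hfree
    rcases eq_or_lt_of_le hle with heq | hlt
    · obtain rfl : m = k := hinj heq
      intro z hz
      by_contra hzF
      have h0 := (hU m).2.2.2.2.2.2.2 z ⟨hz.2, hzF⟩
      have hdvd : ζ z ∣ q := hz.1
      rw [h0] at hdvd
      exact absurd (zero_dvd_iff.mp hdvd) (by omega)
    · rcases lt_trichotomy m k with hmk | rfl | hmk
      · exact (hU k).2.2.2.2.2.1 m hmk q hq hlt hfree
      · exact absurd hlt (lt_irrefl _)
      · exact (hU m).2.2.2.2.2.2.1 k hmk q hq hlt hfree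
  -- the function f
  let S : X → Set ℝ := fun z => insert (1 : ℝ) {r : ℝ | ∃ n, z ∈ U n ∧ r = ((rq n : ℚ) : ℝ)}
  let f : X → ℝ := fun z => sInf (S z)
  have hne : ∀ z, (S z).Nonempty := fun z => ⟨1, Set.mem_insert _ _⟩
  have hlb : ∀ z r, r ∈ S z → (0 : ℝ) ≤ r := by
    intro z r hr
    rcases Set.mem_insert_iff.1 hr with rfl | ⟨n, -, rfl⟩
    · norm_num
    · exact_mod_cast hr0 n
  have hbdd : ∀ z, BddBelow (S z) := fun z => ⟨0, fun r hr => hlb z r hr⟩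
  have hf0 : ∀ z, 0 ≤ f z := fun z => le_csInf (hne z) (hlb z)
  have hf1 : ∀ z, f z ≤ 1 := fun z => csInf_le (hbdd z) (Set.mem_insert _ _)
  have hfle : ∀ z n, z ∈ U n → f z ≤ ((rq n : ℚ) : ℝ) := fun z n hz =>
    csInf_le (hbdd z) (Set.mem_insert_iff.2 (Or.inr ⟨n, hz, rfl⟩))
  have hex : ∀ z (a : ℝ), f z < a → ∃ r ∈ S z, r < a := fun z a h =>
    exists_lt_of_csInf_lt (hne z) h
  -- f x = 0
  have hfx : f x = 0 := by
    obtain ⟨n0, hn0⟩ := hsurj 0 le_rfl (by norm_num)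
    have h1 : f x ≤ ((rq n0 : ℚ) : ℝ) := hfle x n0 (xU n0)
    rw [hn0] at h1
    push_cast at h1
    exact le_antisymm h1 (hf0 x)
  -- f y = 1
  have hfy : f y = 1 := by
    have hSy : S y = {1} := by
      ext r
      simp only [Set.mem_insert_iff, Set.mem_setOf_eq, Set.mem_singleton_iff]
      constructor
      · rintro (rfl | ⟨n, hn, rfl⟩)
        · rfl
        · exact absurd (subset_closure hn) (yU n)
      · rintro rfl; left; rfl
    show sInf (S y) = 1
    rw [hSy, csInf_singleton]
  -- continuity
  have hopenlt : ∀ a : ℝ, IsOpen {z | f z < a} := by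
    intro a
    rw [isOpen_iff_forall_mem_open]
    intro z hz
    obtain ⟨r, hrS, hra⟩ := hex z a hz
    rcases Set.mem_insert_iff.1 hrS with rfl | ⟨n, hzU, rfl⟩
    · exact ⟨Set.univ, fun w _ => lt_of_le_of_lt (hf1 w) hra, isOpen_univ, trivial⟩
    · exact ⟨U n, fun w hw => lt_of_le_of_lt (hfle w n hw) hra, Uopen n, hzU⟩
  have hopengt : ∀ a : ℝ, IsOpen {z | a < f z} := by
    intro a
    rw [isOpen_iff_forall_mem_open]
    intro z hz
    by_cases ha : a < 0
    · exact ⟨Set.univ, fun w _ => lt_of_lt_of_le ha (hf0 w), isOpen_univ, trivial⟩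
    push_neg at ha
    have hz' : a < f z := hz
    obtain ⟨t2, ht2a, ht2f⟩ := exists_rat_btwn hz'
    have h2pos : (0 : ℚ) ≤ t2 := by exact_mod_cast le_of_lt (lt_of_le_of_lt ha ht2a)
    have h2lt1 : t2 < 1 := by exact_mod_cast lt_of_lt_of_le ht2f (hf1 z)
    obtain ⟨n2, hn2⟩ := hsurj t2 h2pos h2lt1
    refine ⟨(closure (U n2))ᶜ, ?_, isClosed_closure.isOpen_compl, ?_⟩
    · intro w hw
      show a < f w
      have hwge : ((t2 : ℚ) : ℝ) ≤ f w := by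
        apply le_csInf (hne w)
        intro r hr
        rcases Set.mem_insert_iff.1 hr with rfl | ⟨m, hm, rfl⟩
        · exact_mod_cast h2lt1.le
        · by_contra hcon
          push_neg at hcon
          have hlt2 : rq m < rq n2 := by rw [hn2]; exact_mod_cast hcon
          exact hw (subset_closure (Umono m n2 hlt2 (subset_closure hm)))
      exact lt_of_lt_of_le ht2a hwge
    · show z ∈ (closure (U n2))ᶜ
      intro hcl
      obtain ⟨t3, ht3a, ht3b⟩ := exists_rat_btwn ht2f
      have h3pos : (0 : ℚ) ≤ t3 := by
        have := lt_trans (lt_of_le_of_lt ha ht2a) ht3a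
        exact_mod_cast this.le
      have h3lt1 : t3 < 1 := by exact_mod_cast lt_of_lt_of_le ht3b (hf1 z)
      obtain ⟨n3, hn3⟩ := hsurj t3 h3pos h3lt1
      have hz3 : z ∈ U n3 := Umono n2 n3 (by rw [hn2, hn3]; exact_mod_cast ht3a) hcl
      have hf3 := hfle z n3 hz3
      rw [hn3] at hf3
      linarith
  have hcont : Continuous f := by
    rw [TopologicalSpace.IsTopologicalBasis.continuous_iff Real.isTopologicalBasis_Ioo_rat]
    intro s hs
    simp only [Set.mem_iUnion, Set.mem_singleton_iff] at hs
    obtain ⟨a, b, hab, rfl⟩ := hs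
    have he : f ⁻¹' Set.Ioo (a : ℝ) b = {z | (a : ℝ) < f z} ∩ {z | f z < (b : ℝ)} := rfl
    rw [he]
    exact (hopengt a).inter (hopenlt b)
  -- divisibility
  have hdvd : ∀ z, den (f z) ∣ ζ z := by
    intro z
    rcases Nat.eq_zero_or_pos (ζ z) with h0 | h1
    · rw [h0]; exact dvd_zero _
    set q := ζ z with hq
    suffices h : ∃ k : ℕ, f z = (((k : ℚ) / (q : ℚ) : ℚ) : ℝ) by
      obtain ⟨k, hk⟩ := h
      rw [hk]
      exact den_div_nat k q
    by_contra hno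
    push_neg at hno
    have hq0 : (0 : ℝ) < (q : ℝ) := by exact_mod_cast h1
    have hfz1 : f z ≠ 1 := by
      intro hh
      apply hno q
      have hd1 : ((q : ℚ) / (q : ℚ) : ℚ) = 1 := div_self (by exact_mod_cast h1.ne')
      rw [hh, hd1]
      norm_num
    have hflt1 : f z < 1 := lt_of_le_of_ne (hf1 z) hfz1
    set kk : ℤ := ⌊f z * q⌋ with hkk
    have hk0 : (0 : ℤ) ≤ kk := Int.floor_nonneg.2 (mul_nonneg (hf0 z) hq0.le)
    have hlow : ((kk : ℝ)) / q ≤ f z := by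
      rw [div_le_iff₀ hq0]; exact Int.floor_le _
    have hupp : f z < ((kk : ℝ) + 1) / q := by
      have hfl := Int.lt_floor_add_one (f z * (q : ℝ))
      rw [lt_div_iff₀ hq0]; exact_mod_cast hfl
    have hlow' : ((kk : ℝ)) / q < f z := by
      rcases eq_or_lt_of_le hlow with he | hl
      · exfalso
        apply hno kk.toNat
        rw [← he]
        have hc1 : ((kk.toNat : ℕ) : ℚ) = (kk : ℚ) := by
          exact_mod_cast congrArg (fun w : ℤ => (w : ℚ)) (Int.toNat_of_nonneg hk0)
        push_cast [hc1]
        ring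
      · exact hl
    have hk1q : (kk : ℝ) + 1 ≤ (q : ℝ) := by
      have hfq : f z * q < q := by nlinarith
      have h2 : kk < (q : ℤ) := Int.floor_lt.2 (by exact_mod_cast hfq)
      exact_mod_cast h2
    obtain ⟨t', h1', h2'⟩ := exists_rat_btwn hlow'
    obtain ⟨t2, h1'', h2''⟩ := exists_rat_btwn hupp
    obtain ⟨r, hrS, hrt2⟩ := hex z ((t2 : ℚ) : ℝ) h1''
    rcases Set.mem_insert_iff.1 hrS with rfl | ⟨n1, hzU1, rfl⟩
    · have hle1 : ((kk : ℝ) + 1) / q ≤ 1 := by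
        rw [div_le_one hq0]; exact hk1q
      linarith
    · have hge : f z ≤ ((rq n1 : ℚ) : ℝ) := csInf_le (hbdd z) hrS
      have ht'0 : (0 : ℚ) ≤ t' := by
        have hnn : (0 : ℝ) ≤ ((kk : ℝ)) / q := div_nonneg (by exact_mod_cast hk0) hq0.le
        exact_mod_cast (lt_of_le_of_lt hnn h1').le
      have ht'1 : t' < 1 := by
        exact_mod_cast lt_of_lt_of_le h2' (hf1 z)
      obtain ⟨n', hn'⟩ := hsurj t' ht'0 ht'1
      have hlen : rq n' ≤ rq n1 := by
        rw [hn']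
        have hc : (t' : ℝ) < ((rq n1 : ℚ) : ℝ) := lt_of_lt_of_le h2' hge
        exact_mod_cast hc.le
      have hfree : Gfree q (rq n') (rq n1) := by
        intro j hj
        have hcast1 : (t' : ℝ) ≤ ((j : ℝ)) / q := by
          have hh := hj.1
          rw [hn'] at hh
          have h2c : ((t' : ℚ) : ℝ) ≤ (((j : ℚ) / (q : ℚ) : ℚ) : ℝ) := Rat.cast_le.2 hh
          push_cast at h2c
          exact h2c
        have hcast2 : ((j : ℝ)) / q ≤ ((rq n1 : ℚ) : ℝ) := by
          have hh := hj.2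
          have h2c : ((((j : ℚ) / (q : ℚ)) : ℚ) : ℝ) ≤ ((rq n1 : ℚ) : ℝ) := Rat.cast_le.2 hh
          push_cast at h2c
          exact h2c
        have hj1 : ((kk : ℝ)) / q < ((j : ℝ)) / q := lt_of_lt_of_le h1' hcast1
        have hj2 : ((j : ℝ)) / q < ((kk : ℝ) + 1) / q :=
          lt_of_le_of_lt hcast2 (lt_trans hrt2 h2'')
        have hj1' : (kk : ℝ) < (j : ℝ) := by
          have := (div_lt_div_iff_of_pos_right hq0).1 hj1
          exact this
        have hj2' : (j : ℝ) < (kk : ℝ) + 1 := (div_lt_div_iff_of_pos_right hq0).1 hj2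
        have hZ1 : (kk : ℤ) < (j : ℤ) := by exact_mod_cast hj1'
        have hZ2 : ((j : ℤ)) < kk + 1 := by exact_mod_cast hj2'
        omega
      have hzin : z ∈ U n' := Uinv n' n1 q h1 hlen hfree ⟨dvd_refl _, subset_closure hzU1⟩
      have hf' := hfle z n' hzin
      rw [hn'] at hf'
      linarith
  exact ⟨f, hcont, fun z => ⟨hf0 z, hf1 z⟩, hdvd, hfx, hfy⟩
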